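/- For every real p ≥ 1 there is a constant K, independent of N and of x, such that for all N ≥ 1 and all x ∈ X^N the MALA proposal y satisfies E_ξ[‖y − x‖_s^p] ≤ K (Δt)^{p/2} (1 + ‖x‖_s^p). -/

import Mathlib

open MeasureTheory ProbabilityTheory Real Filter
open scoped ENNReal NNReal Topology

noncomputable section

/-- The model space for every Sobolev-like space `H^r`: the Hilbert space `ℓ²(ℕ; ℝ)`.
An element `u : Hsp`, viewed as a point of `H^r`, represents the sequence
`(x_j)_{j ≥ 1}` with `x_{j+1} = (j+1)^{-r} * u j` (so that `‖u‖ = ‖x‖_r`,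
and the indices are shifted by one: `j : ℕ` stands for the coordinate `j+1 ≥ 1`). -/
abbrev Hsp : Type := lp (fun _ : ℕ => ℝ) 2

/-- the weight `(j+1)^r`. -/
def wt (r : ℝ) (j : ℕ) : ℝ := ((j : ℝ) + 1) ^ r

/-- the coordinates of `u : Hsp` viewed as an element of `H^r`. -/
def seqr (r : ℝ) (u : Hsp) (j : ℕ) : ℝ := wt (-r) j * u j

/-- the `H^r` norm of a raw sequence. -/
def rnorm (r : ℝ) (a : ℕ → ℝ) : ℝ := (∑' j, wt (2 * r) j * a j ^ 2) ^ ((1 : ℝ) / 2)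

theorem memℓp_of_eventually_zero (f : ℕ → ℝ) (N : ℕ) (hf : ∀ j, N ≤ j → f j = 0) :
    Memℓp f 2 := by
  apply memℓp_gen
  apply summable_of_ne_finset_zero (s := Finset.range N)
  intro j hj
  rw [Finset.mem_range, not_lt] at hj
  rw [hf j hj]
  simp [Real.zero_rpow]

/-- embedding of `X^N ≅ ℝ^N` into `Hsp`, viewing `x : Fin N → ℝ` as the element of `H^s`
whose `(i+1)`-th coordinate is `x i` for `i < N` and `0` beyond. -/
def ofX (s : ℝ) (N : ℕ) (x : Fin N → ℝ) : Hsp :=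
  ⟨fun j => if h : j < N then wt s j * x ⟨j, h⟩ else 0,
   memℓp_of_eventually_zero _ N (fun j hj => dif_neg (Nat.not_lt.mpr hj))⟩

/-- the projection `P^N` (truncation of all coordinates beyond the `N`-th). -/
def PNproj (N : ℕ) (u : Hsp) : Hsp :=
  ⟨fun j => if j < N then u j else 0, by
    apply memℓp_gen
    refine Summable.of_nonneg_of_le (fun j => ?_) (fun j => ?_)
      ((lp.memℓp u).summable (by norm_num))
    · positivity
    · by_cases h : j < N <;> simp [h] <;> positivity⟩

/-- the MALA time step `Δt = N^{-1/3}`. -/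
def Δt (N : ℕ) : ℝ := (N : ℝ) ^ (-(1/3) : ℝ)

/-- `‖u‖²_{C^N} = ∑_{j=1}^N λ_j^{-2} u_j²` on `X^N ≅ ℝ^N`. -/
def cnormsq (lam : ℕ → ℝ) (N : ℕ) (u : Fin N → ℝ) : ℝ :=
  ∑ i : Fin N, (lam i ^ 2)⁻¹ * u i ^ 2

/-- the `H^s` norm of a point of `X^N ≅ ℝ^N`. -/
def xnorm (s : ℝ) (N : ℕ) (u : Fin N → ℝ) : ℝ :=
  (∑ i : Fin N, wt (2 * s) i * u i ^ 2) ^ ((1 : ℝ) / 2)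

/-- `Ψ^N = Ψ ∘ P^N`, as a function on `X^N ≅ ℝ^N`. -/
def PsiN (s : ℝ) (Ψ : Hsp → ℝ) (N : ℕ) (x : Fin N → ℝ) : ℝ := Ψ (ofX s N x)

/-- `μ^N(x) = -(P^N x + C^N ∇Ψ^N(x))` on `X^N ≅ ℝ^N`. -/
def muN (lam : ℕ → ℝ) (s : ℝ) (gradΨ : Hsp → Hsp) (N : ℕ) (x : Fin N → ℝ) : Fin N → ℝ :=
  fun i => -(x i + lam i ^ 2 * seqr (-s) (gradΨ (ofX s N x)) i)

/-- the MALA proposal `y = x + δ μ^N(x) + √(2δ) (C^N)^{1/2} ξ^N`, with `δ = ℓ Δt`. -/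
def propY (lam : ℕ → ℝ) (s : ℝ) (gradΨ : Hsp → Hsp) (ℓ : ℝ) (N : ℕ)
    (x ξ : Fin N → ℝ) : Fin N → ℝ :=
  fun i => x i + (ℓ * Δt N) * muN lam s gradΨ N x i +
    Real.sqrt (2 * (ℓ * Δt N)) * (lam i * ξ i)

/-- the MALA log acceptance ratio `Q^N(x, ξ^N)`. -/
def QN (lam : ℕ → ℝ) (s : ℝ) (Ψ : Hsp → ℝ) (gradΨ : Hsp → Hsp) (ℓ : ℝ) (N : ℕ)
    (x ξ : Fin N → ℝ) : ℝ :=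
  -(1/2) * (cnormsq lam N (propY lam s gradΨ ℓ N x ξ) - cnormsq lam N x)
  - (PsiN s Ψ N (propY lam s gradΨ ℓ N x ξ) - PsiN s Ψ N x)
  - (1 / (4 * (ℓ * Δt N))) *
      (cnormsq lam N (fun i => x i - propY lam s gradΨ ℓ N x ξ i
          - (ℓ * Δt N) * muN lam s gradΨ N (propY lam s gradΨ ℓ N x ξ) i)
       - cnormsq lam N (fun i => propY lam s gradΨ ℓ N x ξ i - x i
          - (ℓ * Δt N) * muN lam s gradΨ N x i))

/-- the law of `ξ^N`: `N` i.i.d. standard Gaussians. -/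
def gaussN (N : ℕ) : Measure (Fin N → ℝ) := Measure.pi fun _ => gaussianReal 0 1

/-- the target `π^N`: the probability measure on `X^N ≅ ℝ^N` whose density with respect to
Lebesgue measure is proportional to `exp(-½‖x‖²_{C^N} - Ψ^N(x))`. -/
def piN (lam : ℕ → ℝ) (s : ℝ) (Ψ : Hsp → ℝ) (N : ℕ) : Measure (Fin N → ℝ) :=
  ((volume.withDensity fun x => ENNReal.ofReal
      (Real.exp (-(1/2) * cnormsq lam N x - PsiN s Ψ N x))) Set.univ)⁻¹ •
  (volume.withDensity fun x => ENNReal.ofReal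
      (Real.exp (-(1/2) * cnormsq lam N x - PsiN s Ψ N x)))

/-- `Z^N(x, ξ^N)`, the Gaussian part of `Q^N`. -/
def ZN (lam : ℕ → ℝ) (ℓ : ℝ) (N : ℕ) (x ξ : Fin N → ℝ) : ℝ :=
  -(ℓ ^ 3) / 4 - (ℓ ^ ((3 : ℝ) / 2) / Real.sqrt 2) * (N : ℝ) ^ (-(1/2) : ℝ) *
      ∑ i : Fin N, (lam i)⁻¹ * ξ i * x i

/-- `i^N(x, ξ^N) = ½ (ℓΔt)² (‖x‖²_{C^N} - ‖(C^N)^{1/2} ξ^N‖²_{C^N})`. -/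
def iN (lam : ℕ → ℝ) (ℓ : ℝ) (N : ℕ) (x ξ : Fin N → ℝ) : ℝ :=
  (1/2) * (ℓ * Δt N) ^ 2 *
    (cnormsq lam N x - cnormsq lam N fun i => lam i * ξ i)

/-- the law of `Z_ℓ ∼ N(-ℓ³/4, ℓ³/2)`. -/
def lawZl (ℓ : ℝ) : Measure ℝ := gaussianReal (-(ℓ ^ 3) / 4) (Real.toNNReal (ℓ ^ 3 / 2))

/-- the limiting mean acceptance probability `α(ℓ) = E[1 ∧ exp(Z_ℓ)]`. -/
def alphaEll (ℓ : ℝ) : ℝ := ∫ z, min 1 (Real.exp z) ∂(lawZl ℓ)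

/-- the speed function `h(ℓ) = ℓ α(ℓ)`. -/
def hEll (ℓ : ℝ) : ℝ := ℓ * alphaEll ℓ


/-!
The increment is `y - x = δ μ^N(x) + √(2δ) (C^N)^{1/2} ξ^N` with `δ = ℓ Δt`.
Since `λ_j² ≤ c₊² j^{-2κ} ≤ c₊² j^{-2s}`, the covariance maps `H^{-s}` into `H^s` with
norm at most `c₊²`, so the linear growth of `∇Ψ` gives
`‖μ^N(x)‖_s ≤ (1 + c₊² M₃)(1 + ‖x‖_s)`. The noise satisfies
`‖(C^N)^{1/2} ξ^N‖_s² = ∑_j j^{2s} λ_j² ξ_j²`, a Gaussian quadratic form whose weights sum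
to at most `c₊² ∑_j j^{2s-2κ}`, finite exactly because `s < κ - 1/2`; by Jensen's
inequality its moments of every order are then bounded uniformly in `N`. As `Δt ≤ 1`,
`δ^p ≤ ℓ^p Δt^{p/2}`, and both contributions are `O(Δt^{p/2} (1 + ‖x‖_s^p))`.
-/

lemma Real.add_rpow_le_mul_rpow_add_rpow {x y p : ℝ} (hx : 0 ≤ x) (hy : 0 ≤ y)
    (hp : 1 ≤ p) :
    (x + y) ^ p ≤ 2 ^ (p - 1) * (x ^ p + y ^ p) := by
  exact_mod_cast NNReal.rpow_add_le_mul_rpow_add_rpow ⟨x, hx⟩ ⟨y, hy⟩ hp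

lemma sum_mul_pow_succ_le {ι : Type*} (s : Finset ι) {a t : ι → ℝ}
    (ha : ∀ i ∈ s, 0 ≤ a i) (ht : ∀ i ∈ s, 0 ≤ t i) (n : ℕ) :
    (∑ i ∈ s, a i * t i) ^ (n + 1) ≤
      (∑ i ∈ s, a i) ^ n * ∑ i ∈ s, a i * t i ^ (n + 1) := by
  set A := ∑ i ∈ s, a i
  rcases (Finset.sum_nonneg ha).eq_or_lt with hA | hA
  · have ha0 : ∀ i ∈ s, a i = 0 := (Finset.sum_eq_zero_iff_of_nonneg ha).1 hA.symm
    have h1 : ∑ i ∈ s, a i * t i = 0 :=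
      Finset.sum_eq_zero fun i hi => by rw [ha0 i hi, zero_mul]
    have h2 : ∑ i ∈ s, a i * t i ^ (n + 1) = 0 :=
      Finset.sum_eq_zero fun i hi => by rw [ha0 i hi, zero_mul]
    simp [h1, h2]
  have hw := Real.pow_arith_mean_le_arith_mean_pow s (fun i => a i / A) t
    (fun i hi => div_nonneg (ha i hi) hA.le) (by rw [← Finset.sum_div, div_self hA.ne']) ht
    (n + 1)
  simp only [div_mul_eq_mul_div, ← Finset.sum_div, div_pow] at hw
  rw [div_le_div_iff₀ (by positivity) hA] at hw
  exact le_of_mul_le_mul_right (hw.trans_eq (by ring)) hA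

lemma rpow_half_le_one_add_pow {x p : ℝ} (hx : 0 ≤ x) (hp : 0 ≤ p) {m : ℕ}
    (hm : p / 2 ≤ m) :
    x ^ (p / 2) ≤ 1 + x ^ m := by
  rcases le_total x 1 with h | h
  · linarith [Real.rpow_le_one hx h (by linarith : 0 ≤ p / 2), pow_nonneg hx m]
  · linarith [Real.rpow_natCast x m ▸ Real.rpow_le_rpow_of_exponent_le h hm]

theorem integral_rpow_le_of_le_add_mul {Ω : Type*} [MeasurableSpace Ω] {μ : Measure Ω}
    [IsProbabilityMeasure μ] {f g : Ω → ℝ} {a b p B : ℝ} (hp : 1 ≤ p) (ha : 0 ≤ a)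
    (hb : 0 ≤ b) (hf : ∀ ω, 0 ≤ f ω) (hg : ∀ ω, 0 ≤ g ω) (hfg : ∀ ω, f ω ≤ a + b * g ω)
    (hgi : Integrable (fun ω => g ω ^ p) μ) (hB : ∫ ω, g ω ^ p ∂μ ≤ B) :
    ∫ ω, f ω ^ p ∂μ ≤ 2 ^ (p - 1) * (a ^ p + b ^ p * B) := by
  have hp0 : 0 ≤ p := by linarith
  calc ∫ ω, f ω ^ p ∂μ ≤ ∫ ω, 2 ^ (p - 1) * (a ^ p + b ^ p * g ω ^ p) ∂μ := by
        refine integral_mono_of_nonneg (ae_of_all _ fun ω => Real.rpow_nonneg (hf ω) p)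
          (((integrable_const _).add (hgi.const_mul _)).const_mul _) (ae_of_all _ fun ω => ?_)
        calc f ω ^ p ≤ (a + b * g ω) ^ p := Real.rpow_le_rpow (hf ω) (hfg ω) hp0
          _ ≤ 2 ^ (p - 1) * (a ^ p + (b * g ω) ^ p) :=
            Real.add_rpow_le_mul_rpow_add_rpow ha (mul_nonneg hb (hg ω)) hp
          _ = 2 ^ (p - 1) * (a ^ p + b ^ p * g ω ^ p) := by rw [Real.mul_rpow hb (hg ω)]
    _ = 2 ^ (p - 1) * (a ^ p + b ^ p * ∫ ω, g ω ^ p ∂μ) := by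
        rw [integral_const_mul, integral_add (integrable_const _) (hgi.const_mul _),
          integral_const_mul]
        simp
    _ ≤ 2 ^ (p - 1) * (a ^ p + b ^ p * B) := by gcongr

lemma wt_pos (r : ℝ) (j : ℕ) : 0 < wt r j := by
  unfold wt; positivity

lemma wt_mul_wt (a b : ℝ) (j : ℕ) : wt a j * wt b j = wt (a + b) j :=
  (Real.rpow_add (by positivity) a b).symm

lemma wt_sq (r : ℝ) (j : ℕ) : wt r j ^ 2 = wt (2 * r) j := by
  rw [sq, wt_mul_wt, two_mul]

lemma wt_le_wt {r r' : ℝ} (h : r ≤ r') (j : ℕ) : wt r j ≤ wt r' j :=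
  Real.rpow_le_rpow_of_exponent_le (by simp) h

lemma summable_wt {r : ℝ} (hr : r < -1) : Summable (wt r) :=
  (summable_nat_add_iff 1).2 (Real.summable_nat_rpow.2 hr) |>.congr fun j => by simp [wt]

lemma wt_mul_sq_le {κ c r x : ℝ} {j : ℕ} (hx : 0 ≤ x) (hxc : x ≤ c * wt (-κ) j) :
    wt r j * x ^ 2 ≤ c ^ 2 * wt (r - 2 * κ) j := by
  calc wt r j * x ^ 2 ≤ wt r j * (c * wt (-κ) j) ^ 2 := by
        gcongr; exact (wt_pos _ _).le
    _ = c ^ 2 * wt (r - 2 * κ) j := by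
        rw [mul_pow, wt_sq, mul_left_comm, wt_mul_wt]; ring_nf

def weightedEuclidean (s : ℝ) (N : ℕ) : (Fin N → ℝ) →ₗ[ℝ] EuclideanSpace ℝ (Fin N) where
  toFun u := WithLp.toLp 2 fun i => wt s i * u i
  map_add' u v := by ext i; simp [mul_add]
  map_smul' c u := by ext i; simp [mul_left_comm]

lemma xnorm_eq_norm (s : ℝ) (N : ℕ) (u : Fin N → ℝ) :
    xnorm s N u = ‖weightedEuclidean s N u‖ := by
  rw [EuclideanSpace.norm_eq, xnorm, ← Real.sqrt_eq_rpow]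
  congr 1
  refine Finset.sum_congr rfl fun i _ => ?_
  simp [weightedEuclidean, mul_pow, wt_sq]

lemma xnorm_nonneg (s : ℝ) (N : ℕ) (u : Fin N → ℝ) : 0 ≤ xnorm s N u := by
  rw [xnorm_eq_norm]; exact norm_nonneg _

lemma xnorm_add_le (s : ℝ) (N : ℕ) (u v : Fin N → ℝ) :
    xnorm s N (u + v) ≤ xnorm s N u + xnorm s N v := by
  simp only [xnorm_eq_norm, map_add, norm_add_le]

lemma xnorm_smul (s : ℝ) (N : ℕ) (c : ℝ) (u : Fin N → ℝ) :
    xnorm s N (c • u) = |c| * xnorm s N u := by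
  rw [xnorm_eq_norm, xnorm_eq_norm, map_smul, norm_smul, Real.norm_eq_abs]

lemma xnorm_neg (s : ℝ) (N : ℕ) (u : Fin N → ℝ) : xnorm s N (-u) = xnorm s N u := by
  rw [xnorm_eq_norm, xnorm_eq_norm, map_neg, norm_neg]

lemma xnorm_le_xnorm_of_abs_le {s : ℝ} {N : ℕ} {u v : Fin N → ℝ}
    (h : ∀ i, |u i| ≤ |v i|) :
    xnorm s N u ≤ xnorm s N v := by
  refine Real.rpow_le_rpow (Finset.sum_nonneg fun i _ => ?_)
    (Finset.sum_le_sum fun i _ => ?_) (by norm_num)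
  · exact mul_nonneg (wt_pos _ _).le (sq_nonneg _)
  · exact mul_le_mul_of_nonneg_left (sq_le_sq.2 (h i)) (wt_pos _ _).le

lemma xnorm_rpow (s : ℝ) (N : ℕ) (u : Fin N → ℝ) (p : ℝ) :
    xnorm s N u ^ p = (∑ i : Fin N, wt (2 * s) i * u i ^ 2) ^ (p / 2) := by
  rw [xnorm, ← Real.rpow_mul (Finset.sum_nonneg fun i _ => by positivity [wt_pos (2 * s) i]),
    one_div_mul_eq_div]

lemma norm_ofX (s : ℝ) (N : ℕ) (x : Fin N → ℝ) : ‖ofX s N x‖ = xnorm s N x := by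
  rw [lp.norm_eq_tsum_rpow (by norm_num), xnorm, tsum_eq_sum (s := Finset.range N),
    Finset.sum_range]
  · simp only [ENNReal.toReal_ofNat]
    refine congrArg (fun t : ℝ => t ^ (1 / 2 : ℝ)) (Finset.sum_congr rfl fun i _ => ?_)
    simp [ofX, mul_pow, wt_sq]
  · intro j hj
    simp [ofX, not_lt.1 (by simpa using hj)]

lemma xnorm_wt_neg_mul_le_norm (s : ℝ) (N : ℕ) (g : Hsp) :
    xnorm s N (fun i => wt (-s) i * g i) ≤ ‖g‖ := by
  have hg := lp.sum_rpow_le_norm_rpow (p := 2) (by norm_num) g (Finset.range N)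
  rw [Finset.sum_range] at hg
  rw [xnorm, ← Real.sqrt_eq_rpow, ← Real.sqrt_sq (norm_nonneg g)]
  refine Real.sqrt_le_sqrt
    (le_of_eq_of_le (Finset.sum_congr rfl fun i _ => ?_) (by simpa using hg))
  rw [mul_pow, ← mul_assoc, wt_sq, wt_mul_wt]
  simp [wt]

instance (N : ℕ) : IsProbabilityMeasure (gaussN N) := by
  unfold gaussN; infer_instance

lemma integrable_gaussianReal_pow (k : ℕ) :
    Integrable (fun t : ℝ => t ^ k) (gaussianReal 0 1) :=
  (integrable_norm_iff (by fun_prop)).1 <| by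
    simpa [norm_pow] using (memLp_id_gaussianReal (μ := 0) (v := 1) k).integrable_norm_pow'

lemma integral_gaussianReal_pow_two_mul_nonneg (n : ℕ) :
    0 ≤ ∫ t, t ^ (2 * n) ∂gaussianReal 0 1 :=
  integral_nonneg fun t => by simp only [pow_mul]; positivity

section Gaussian

variable {N : ℕ}

lemma integrable_gaussN_eval_pow (i : Fin N) (k : ℕ) :
    Integrable (fun ξ : Fin N → ℝ => ξ i ^ k) (gaussN N) :=
  (measurePreserving_eval _ i).integrable_comp_of_integrable (integrable_gaussianReal_pow k)

lemma integral_gaussN_eval_pow (i : Fin N) (k : ℕ) :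
    ∫ ξ, ξ i ^ k ∂gaussN N = ∫ t, t ^ k ∂gaussianReal 0 1 := by
  rw [← (measurePreserving_eval (fun _ : Fin N => gaussianReal 0 1) i).map_eq,
    integral_map (measurable_pi_apply i).aemeasurable (by fun_prop)]
  rfl

lemma integrable_sum_mul_pow (a : Fin N → ℝ) (k : ℕ) :
    Integrable (fun ξ : Fin N → ℝ => ∑ i, a i * ξ i ^ k) (gaussN N) :=
  integrable_finsetSum _ fun i _ => (integrable_gaussN_eval_pow i k).const_mul (a i)

lemma integral_sum_mul_pow (a : Fin N → ℝ) (k : ℕ) :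
    ∫ ξ, ∑ i, a i * ξ i ^ k ∂gaussN N = (∑ i, a i) * ∫ t, t ^ k ∂gaussianReal 0 1 := by
  rw [integral_finsetSum _ fun i _ => (integrable_gaussN_eval_pow i k).const_mul (a i),
    Finset.sum_mul]
  simp only [integral_const_mul, integral_gaussN_eval_pow]

variable {a : Fin N → ℝ} {p : ℝ}

lemma sum_mul_sq_nonneg (ha : ∀ i, 0 ≤ a i) (ξ : Fin N → ℝ) : 0 ≤ ∑ i, a i * ξ i ^ 2 :=
  Finset.sum_nonneg fun i _ => by positivity [ha i]

lemma rpow_sum_mul_sq_le (ha : ∀ i, 0 ≤ a i) (hp : 0 ≤ p) (ξ : Fin N → ℝ) :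
    (∑ i, a i * ξ i ^ 2) ^ (p / 2) ≤
      1 + (∑ i, a i) ^ ⌈p / 2⌉₊ * ∑ i, a i * ξ i ^ (2 * (⌈p / 2⌉₊ + 1)) := by
  have hm : p / 2 ≤ ((⌈p / 2⌉₊ + 1 : ℕ) : ℝ) := by push_cast; linarith [Nat.le_ceil (p / 2)]
  refine (rpow_half_le_one_add_pow (sum_mul_sq_nonneg ha ξ) hp hm).trans ?_
  gcongr
  simpa only [pow_mul] using sum_mul_pow_succ_le Finset.univ
    (fun i _ => ha i) (fun i _ => sq_nonneg (ξ i)) ⌈p / 2⌉₊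

lemma integrable_rpow_sum_mul_sq (ha : ∀ i, 0 ≤ a i) (hp : 0 ≤ p) :
    Integrable (fun ξ : Fin N → ℝ => (∑ i, a i * ξ i ^ 2) ^ (p / 2)) (gaussN N) := by
  refine ((integrable_const 1).add ((integrable_sum_mul_pow a (2 * (⌈p / 2⌉₊ + 1))).const_mul
    ((∑ i, a i) ^ ⌈p / 2⌉₊))).mono'
    (by fun_prop : Measurable _).aestronglyMeasurable (ae_of_all _ fun ξ => ?_)
  rw [Real.norm_of_nonneg (Real.rpow_nonneg (sum_mul_sq_nonneg ha ξ) _)]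
  exact rpow_sum_mul_sq_le ha hp ξ

lemma integral_rpow_sum_mul_sq_le (ha : ∀ i, 0 ≤ a i) (hp : 0 ≤ p) {S : ℝ}
    (hS : ∑ i, a i ≤ S) :
    ∫ ξ, (∑ i, a i * ξ i ^ 2) ^ (p / 2) ∂gaussN N ≤
      1 + S ^ (⌈p / 2⌉₊ + 1) * ∫ t, t ^ (2 * (⌈p / 2⌉₊ + 1)) ∂gaussianReal 0 1 := by
  set n := ⌈p / 2⌉₊
  have hA : 0 ≤ ∑ i, a i := Finset.sum_nonneg fun i _ => ha i
  have hmoment := integral_gaussianReal_pow_two_mul_nonneg (n + 1)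
  calc ∫ ξ, (∑ i, a i * ξ i ^ 2) ^ (p / 2) ∂gaussN N
      ≤ ∫ ξ, (1 + (∑ i, a i) ^ n * ∑ i, a i * ξ i ^ (2 * (n + 1))) ∂gaussN N :=
        integral_mono_of_nonneg (ae_of_all _ fun ξ => Real.rpow_nonneg (sum_mul_sq_nonneg ha ξ) _)
          ((integrable_const 1).add ((integrable_sum_mul_pow a _).const_mul _))
          (ae_of_all _ (rpow_sum_mul_sq_le ha hp))
    _ = 1 + (∑ i, a i) ^ (n + 1) * ∫ t, t ^ (2 * (n + 1)) ∂gaussianReal 0 1 := by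
        rw [integral_add (integrable_const 1) ((integrable_sum_mul_pow a _).const_mul _),
          integral_const_mul, integral_sum_mul_pow]
        simp only [integral_const, probReal_univ, smul_eq_mul, one_mul, pow_succ]
        ring
    _ ≤ 1 + S ^ (n + 1) * ∫ t, t ^ (2 * (n + 1)) ∂gaussianReal 0 1 := by gcongr

end Gaussian

lemma Δt_pos {N : ℕ} (hN : 1 ≤ N) : 0 < Δt N :=
  Real.rpow_pos_of_pos (by exact_mod_cast hN) _

lemma Δt_le_one {N : ℕ} (hN : 1 ≤ N) : Δt N ≤ 1 :=
  Real.rpow_le_one_of_one_le_of_nonpos (by exact_mod_cast hN) (by norm_num)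

lemma propY_sub_eq (lam : ℕ → ℝ) (s : ℝ) (gradΨ : Hsp → Hsp) (ℓ : ℝ) (N : ℕ)
    (x ξ : Fin N → ℝ) :
    (fun i => propY lam s gradΨ ℓ N x ξ i - x i) =
      (ℓ * Δt N) • muN lam s gradΨ N x +
        √(2 * (ℓ * Δt N)) • fun i : Fin N => lam i * ξ i := by
  funext i
  simp only [propY, Pi.add_apply, Pi.smul_apply, smul_eq_mul]
  ring

section Covariance

variable {lam : ℕ → ℝ} {κ c s : ℝ}

lemma xnorm_covariance_apply_le (hlam0 : ∀ j, 0 ≤ lam j)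
    (hlamc : ∀ j, lam j ≤ c * wt (-κ) j) (hsκ : s ≤ κ) (N : ℕ) (g : Hsp) :
    xnorm s N (fun i => lam i ^ 2 * seqr (-s) g i) ≤ c ^ 2 * ‖g‖ := by
  have hcoord (i : Fin N) : lam i ^ 2 * wt s i ≤ c ^ 2 * wt (-s) i := by
    calc lam i ^ 2 * wt s i ≤ c ^ 2 * wt (s - 2 * κ) i := by
          rw [mul_comm]; exact wt_mul_sq_le (hlam0 i) (hlamc i)
      _ ≤ c ^ 2 * wt (-s) i := by gcongr; exact wt_le_wt (by linarith) _
  calc xnorm s N (fun i => lam i ^ 2 * seqr (-s) g i)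
      ≤ xnorm s N (c ^ 2 • fun i : Fin N => wt (-s) i * g i) :=
        xnorm_le_xnorm_of_abs_le fun i => by
        simp only [seqr, neg_neg, Pi.smul_apply, smul_eq_mul, abs_mul, ← mul_assoc,
          abs_of_nonneg (wt_pos _ _).le, abs_sq]
        exact mul_le_mul_of_nonneg_right (hcoord i) (abs_nonneg _)
    _ = c ^ 2 * xnorm s N (fun i => wt (-s) i * g i) := by rw [xnorm_smul, abs_sq]
    _ ≤ c ^ 2 * ‖g‖ := by gcongr; exact xnorm_wt_neg_mul_le_norm s N g

lemma xnorm_muN_le {gradΨ : Hsp → Hsp} {M : ℝ} (hlam0 : ∀ j, 0 ≤ lam j)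
    (hlamc : ∀ j, lam j ≤ c * wt (-κ) j) (hsκ : s ≤ κ)
    (hgradb : ∀ x : Hsp, ‖gradΨ x‖ ≤ M * (1 + ‖x‖)) (N : ℕ) (x : Fin N → ℝ) :
    xnorm s N (muN lam s gradΨ N x) ≤ (1 + c ^ 2 * M) * (1 + xnorm s N x) := by
  have hgrad := hgradb (ofX s N x)
  rw [norm_ofX] at hgrad
  have hcov := xnorm_covariance_apply_le hlam0 hlamc hsκ N (gradΨ (ofX s N x))
  have hμ : muN lam s gradΨ N x =
      -(x + fun i : Fin N => lam i ^ 2 * seqr (-s) (gradΨ (ofX s N x)) i) := rfl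
  calc xnorm s N (muN lam s gradΨ N x)
      ≤ xnorm s N x + xnorm s N (fun i => lam i ^ 2 * seqr (-s) (gradΨ (ofX s N x)) i) := by
        rw [hμ, xnorm_neg]; exact xnorm_add_le _ _ _ _
    _ ≤ xnorm s N x + c ^ 2 * (M * (1 + xnorm s N x)) := by
        gcongr; exact hcov.trans (by gcongr)
    _ = (1 + c ^ 2 * M) * (1 + xnorm s N x) - 1 := by ring
    _ ≤ (1 + c ^ 2 * M) * (1 + xnorm s N x) := by linarith

lemma sum_wt_mul_sq_le_tsum (hlam0 : ∀ j, 0 ≤ lam j)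
    (hlamc : ∀ j, lam j ≤ c * wt (-κ) j) (hsκ : s < κ - 1 / 2) (N : ℕ) :
    ∑ i : Fin N, wt (2 * s) i * lam i ^ 2 ≤ c ^ 2 * ∑' j, wt (2 * s - 2 * κ) j := by
  calc ∑ i : Fin N, wt (2 * s) i * lam i ^ 2
      ≤ ∑ j ∈ Finset.range N, c ^ 2 * wt (2 * s - 2 * κ) j := by
        rw [Finset.sum_range]
        exact Finset.sum_le_sum fun i _ => wt_mul_sq_le (hlam0 i) (hlamc i)
    _ ≤ c ^ 2 * ∑' j, wt (2 * s - 2 * κ) j := by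
        rw [← Finset.mul_sum]
        gcongr
        exact (summable_wt (by linarith)).sum_le_tsum _ fun j _ => (wt_pos _ _).le

theorem exists_bound_integral_xnorm_noise_rpow {p : ℝ}
    (hlam0 : ∀ j, 0 ≤ lam j) (hlamc : ∀ j, lam j ≤ c * wt (-κ) j) (hsκ : s < κ - 1 / 2)
    (hp : 0 ≤ p) :
    ∃ B, 0 ≤ B ∧ ∀ N,
      Integrable (fun ξ : Fin N → ℝ => xnorm s N (fun i => lam i * ξ i) ^ p) (gaussN N) ∧
      ∫ ξ, xnorm s N (fun i => lam i * ξ i) ^ p ∂gaussN N ≤ B := by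
  set S := c ^ 2 * ∑' j, wt (2 * s - 2 * κ) j
  have hS : 0 ≤ S := mul_nonneg (sq_nonneg c) (tsum_nonneg fun j => (wt_pos _ _).le)
  have hmoment := integral_gaussianReal_pow_two_mul_nonneg (⌈p / 2⌉₊ + 1)
  refine ⟨1 + S ^ (⌈p / 2⌉₊ + 1) * ∫ t, t ^ (2 * (⌈p / 2⌉₊ + 1)) ∂gaussianReal 0 1,
    by positivity, fun N => ?_⟩
  have ha (i : Fin N) : 0 ≤ wt (2 * s) i * lam i ^ 2 := mul_nonneg (wt_pos _ _).le (sq_nonneg _)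
  simp only [xnorm_rpow, mul_pow, ← mul_assoc]
  exact ⟨integrable_rpow_sum_mul_sq ha hp,
    integral_rpow_sum_mul_sq_le ha hp (sum_wt_mul_sq_le_tsum hlam0 hlamc hsκ N)⟩

lemma xnorm_propY_sub_le {M ℓ : ℝ} {gradΨ : Hsp → Hsp}
    (hlam0 : ∀ j, 0 ≤ lam j) (hlamc : ∀ j, lam j ≤ c * wt (-κ) j) (hsκ : s ≤ κ)
    (hgradb : ∀ x : Hsp, ‖gradΨ x‖ ≤ M * (1 + ‖x‖)) {N : ℕ} (hδ : 0 ≤ ℓ * Δt N)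
    (x ξ : Fin N → ℝ) :
    xnorm s N (fun i => propY lam s gradΨ ℓ N x ξ i - x i) ≤
      ℓ * Δt N * ((1 + c ^ 2 * M) * (1 + xnorm s N x)) +
        √(2 * (ℓ * Δt N)) * xnorm s N (fun i => lam i * ξ i) := by
  rw [propY_sub_eq]
  refine (xnorm_add_le _ _ _ _).trans ?_
  rw [xnorm_smul, xnorm_smul, abs_of_nonneg hδ, abs_of_nonneg (Real.sqrt_nonneg _)]
  gcongr
  exact xnorm_muN_le hlam0 hlamc hsκ hgradb N x

end Covariance

lemma drift_add_noise_rpow_le {Δ ℓ C X B p : ℝ} (hp : 1 ≤ p) (hΔ0 : 0 ≤ Δ)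
    (hΔ1 : Δ ≤ 1) (hℓ : 0 ≤ ℓ) (hC : 0 ≤ C) (hX : 0 ≤ X) (hB : 0 ≤ B) :
    2 ^ (p - 1) * ((ℓ * Δ * (C * (1 + X))) ^ p + √(2 * (ℓ * Δ)) ^ p * B) ≤
      2 ^ (p - 1) * ((ℓ * C) ^ p * 2 ^ (p - 1) + (2 * ℓ) ^ (p / 2) * B) *
        Δ ^ (p / 2) * (1 + X ^ p) := by
  have hXp : 0 ≤ X ^ p := Real.rpow_nonneg hX p
  have hdrift : (ℓ * Δ * (C * (1 + X))) ^ p ≤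
      (ℓ * C) ^ p * 2 ^ (p - 1) * Δ ^ (p / 2) * (1 + X ^ p) := by
    rw [show ℓ * Δ * (C * (1 + X)) = ℓ * C * (Δ * (1 + X)) by ring,
      Real.mul_rpow (by positivity) (by positivity), Real.mul_rpow hΔ0 (by positivity)]
    have hΔp : Δ ^ p ≤ Δ ^ (p / 2) :=
      Real.rpow_le_rpow_of_exponent_ge' hΔ0 hΔ1 (by linarith) (by linarith)
    have hXp' : (1 + X) ^ p ≤ 2 ^ (p - 1) * (1 + X ^ p) := by
      simpa using Real.add_rpow_le_mul_rpow_add_rpow zero_le_one hX hp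
    calc (ℓ * C) ^ p * (Δ ^ p * (1 + X) ^ p)
        ≤ (ℓ * C) ^ p * (Δ ^ (p / 2) * (2 ^ (p - 1) * (1 + X ^ p))) := by gcongr
      _ = _ := by ring
  have hnoise :
      √(2 * (ℓ * Δ)) ^ p * B ≤ (2 * ℓ) ^ (p / 2) * B * Δ ^ (p / 2) * (1 + X ^ p) := by
    rw [Real.sqrt_eq_rpow, ← Real.rpow_mul (by positivity),
      show 2 * (ℓ * Δ) = 2 * ℓ * Δ by ring, Real.mul_rpow (by positivity) hΔ0, one_div_mul_eq_div]
    calc (2 * ℓ) ^ (p / 2) * Δ ^ (p / 2) * B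
        = (2 * ℓ) ^ (p / 2) * B * Δ ^ (p / 2) * 1 := by ring
      _ ≤ _ := by gcongr; linarith
  calc _ ≤ 2 ^ (p - 1) * ((ℓ * C) ^ p * 2 ^ (p - 1) * Δ ^ (p / 2) * (1 + X ^ p) +
        (2 * ℓ) ^ (p / 2) * B * Δ ^ (p / 2) * (1 + X ^ p)) := by gcongr
    _ = _ := by ring

theorem statement_6_general (lam : ℕ → ℝ) (κ cminus cplus s : ℝ) (gradΨ : Hsp → Hsp)
    (M₃ : ℝ)
    (hlampos : ∀ j : ℕ, 0 < lam j)
    (hlam : ∀ j : ℕ, cminus * wt (-κ) j ≤ lam j ∧ lam j ≤ cplus * wt (-κ) j)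
    (hsκ : s < κ - 1/2)
    (hgradb : ∀ x : Hsp, ‖gradΨ x‖ ≤ M₃ * (1 + ‖x‖)) (ℓ : ℝ) (hℓ : 0 < ℓ):
    ∀ p : ℝ, 1 ≤ p → ∃ K : ℝ, ∀ N : ℕ, 1 ≤ N → ∀ x : Fin N → ℝ,
      (∫ ξ, xnorm s N (fun i => propY lam s gradΨ ℓ N x ξ i - x i) ^ p ∂(gaussN N))
        ≤ K * Δt N ^ (p / 2) * (1 + xnorm s N x ^ p) := by
  intro p hp
  have hlam0 (j : ℕ) : 0 ≤ lam j := (hlampos j).le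
  have hlamc (j : ℕ) : lam j ≤ cplus * wt (-κ) j := (hlam j).2
  obtain ⟨B, hB0, hB⟩ :=
    exists_bound_integral_xnorm_noise_rpow hlam0 hlamc hsκ (by linarith : 0 ≤ p)
  have hM₃ : 0 ≤ M₃ := by simpa using (norm_nonneg _).trans (hgradb 0)
  set C := 1 + cplus ^ 2 * M₃
  refine ⟨2 ^ (p - 1) * ((ℓ * C) ^ p * 2 ^ (p - 1) + (2 * ℓ) ^ (p / 2) * B),
    fun N hN x => ?_⟩
  have hδ : 0 ≤ ℓ * Δt N := mul_nonneg hℓ.le (Δt_pos hN).le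
  calc _ ≤ 2 ^ (p - 1) * ((ℓ * Δt N * (C * (1 + xnorm s N x))) ^ p +
        √(2 * (ℓ * Δt N)) ^ p * B) :=
        integral_rpow_le_of_le_add_mul hp (by positivity [xnorm_nonneg s N x])
          (Real.sqrt_nonneg _) (fun _ => xnorm_nonneg _ _ _) (fun _ => xnorm_nonneg _ _ _)
          (xnorm_propY_sub_le hlam0 hlamc (by linarith) hgradb hδ x) (hB N).1 (hB N).2
    _ ≤ _ := drift_add_noise_rpow_le hp (Δt_pos hN).le (Δt_le_one hN) hℓ.le (by positivity)
        (xnorm_nonneg s N x) hB0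

theorem statement_6 (lam : ℕ → ℝ) (κ cminus cplus s : ℝ) (Ψ : Hsp → ℝ) (gradΨ : Hsp → Hsp)
    (M₁ M₂ M₃ M₄ : ℝ)
    (hκ : 1/2 < κ) (hcminus : 0 < cminus) (hcpm : cminus ≤ cplus)
    (hlampos : ∀ j : ℕ, 0 < lam j)
    (hlam : ∀ j : ℕ, cminus * wt (-κ) j ≤ lam j ∧ lam j ≤ cplus * wt (-κ) j)
    (hs0 : 0 ≤ s) (hsκ : s < κ - 1/2)
    (hΨdiff : Differentiable ℝ Ψ) (hΨdiff2 : Differentiable ℝ (fderiv ℝ Ψ))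
    (hgradrep : ∀ x h : Hsp, fderiv ℝ Ψ x h = ∑' j, seqr (-s) (gradΨ x) j * seqr s h j)
    (hΨlb : ∀ x : Hsp, M₁ ≤ Ψ x) (hΨub : ∀ x : Hsp, Ψ x ≤ M₂ * (1 + ‖x‖ ^ 2))
    (hgradb : ∀ x : Hsp, ‖gradΨ x‖ ≤ M₃ * (1 + ‖x‖))
    (hhessb : ∀ x : Hsp, ‖fderiv ℝ (fderiv ℝ Ψ) x‖ ≤ M₄) (ℓ : ℝ) (hℓ : 0 < ℓ):
    ∀ p : ℝ, 1 ≤ p → ∃ K : ℝ, ∀ N : ℕ, 1 ≤ N → ∀ x : Fin N → ℝ,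
      (∫ ξ, xnorm s N (fun i => propY lam s gradΨ ℓ N x ξ i - x i) ^ p ∂(gaussN N))
        ≤ K * Δt N ^ (p / 2) * (1 + xnorm s N x ^ p) :=
  statement_6_general lam κ cminus cplus s gradΨ M₃ hlampos hlam hsκ hgradb ℓ hℓ

end
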